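/- arXiv:2208.10674 — 3 statements merged into one kernel-verified Lean document; each statement's English description precedes it below -/
import Mathlib

section
/- Let X be a finite set with |X| = S−1, where S ≥ 2, and let 1 ≤ d ≤ S−1 and N_C ≥ 1 be natural numbers. Then, in the rational numbers, the number of functions f from Fin N_C to the d-element subsets of X such that there exists j ∈ X with j ∈ f(i) for every i, divided by C(S−1, d)^{N_C}, is at most (S−1) · (d/(S−1))^{N_C}. That is, the probability of a privacy breach of a fixed agent under uniformly random independent neighbor sets is at most (S−1)(d/(S−1))^{N_C}. -/
/-!
A fixed node `j` lies in a uniformly random `d`-subset of an `n`-set with probability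
`C(n-1, d-1) / C(n, d) = d / n`, so it lies in all `N_C` independent neighbor sets with
probability `(d / n) ^ N_C`. A breach is the union of these events over the `n` possible nodes
`j`, and the union bound gives `n * (d / n) ^ N_C`.
-/

open Finset

namespace Finset

variable {α : Type*} [DecidableEq α]

theorem card_mul_card_filter_mem_powersetCard {t : Finset α} {j : α} (hj : j ∈ t) (d : ℕ) :
    #t * #{A ∈ t.powersetCard d | j ∈ A} = (#t).choose d * d := by
  cases d with
  | zero => simp
  | succ k =>
    obtain ⟨m, hm⟩ := Nat.exists_eq_add_one.2 (card_pos.2 ⟨j, hj⟩)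
    have hcount : #{A ∈ t.powersetCard (k + 1) | j ∈ A} = m.choose k := by
      simpa [hm] using card_filter_powersetCard_subset {j} t (k + 1)
        (singleton_subset_iff.2 hj) (by simp)
    rw [hcount, hm, Nat.add_one_mul_choose_eq]

theorem card_filter_mem_powersetCard_div_choose {K : Type*} [Field K] [CharZero K]
    {t : Finset α} {j : α} (hj : j ∈ t) {d : ℕ} (hd : d ≤ #t) :
    (#{A ∈ t.powersetCard d | j ∈ A} : K) / (#t).choose d = d / #t := by
  have hchoose : ((#t).choose d : K) ≠ 0 := by exact_mod_cast (Nat.choose_pos hd).ne'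
  have ht : (#t : K) ≠ 0 := by exact_mod_cast (card_pos.2 ⟨j, hj⟩).ne'
  rw [div_eq_div_iff hchoose ht, mul_comm, mul_comm (d : K)]
  exact_mod_cast card_mul_card_filter_mem_powersetCard hj d

end Finset

theorem Fintype.card_filter_piFinset_exists_forall_le {ι α β : Type*} [Fintype ι]
    [DecidableEq ι] [Fintype β] (s : Finset α) (r : β → α → Prop)
    [∀ j, DecidablePred (r j)] :
    #{f ∈ Fintype.piFinset (fun _ : ι => s) | ∃ j, ∀ i, r j (f i)}
      ≤ ∑ j, #{a ∈ s | r j a} ^ Fintype.card ι := by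
  classical
  calc #{f ∈ Fintype.piFinset (fun _ : ι => s) | ∃ j, ∀ i, r j (f i)}
      ≤ #(univ.biUnion fun j => Fintype.piFinset fun _ : ι => {a ∈ s | r j a}) := by
        refine card_le_card fun f hf => ?_
        obtain ⟨hfs, j, hj⟩ := mem_filter.1 hf
        simp only [mem_biUnion, mem_univ, true_and, Fintype.mem_piFinset, mem_filter]
        exact ⟨j, fun i => ⟨Fintype.mem_piFinset.1 hfs i, hj i⟩⟩
    _ ≤ ∑ j, #(Fintype.piFinset fun _ : ι => {a ∈ s | r j a}) := card_biUnion_le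
    _ = ∑ j, #{a ∈ s | r j a} ^ Fintype.card ι := by simp

theorem card_powersetCard_valued_exists_forall_mem_le {ι X : Type*} [Fintype ι]
    [Fintype X] [DecidableEq X] (d : ℕ) :
    Nat.card {f : ι → Finset X // (∀ i, #(f i) = d) ∧ ∃ j : X, ∀ i, j ∈ f i}
      ≤ ∑ j : X, #{A ∈ univ.powersetCard d | j ∈ A} ^ Fintype.card ι := by
  classical
  rw [Nat.card_eq_fintype_card, Fintype.card_subtype]
  refine (congrArg card ?_).trans_le
    (Fintype.card_filter_piFinset_exists_forall_le _ fun (j : X) A => j ∈ A)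
  ext f
  simp [Fintype.mem_piFinset]

theorem breach_probability_le_general
    (S d NC : ℕ) (X : Type*) [Fintype X] [DecidableEq X]
    (hX : Fintype.card X = S - 1) (hS : 2 ≤ S) (hd2 : d ≤ S - 1) :
    (Nat.card {f : Fin NC → Finset X //
        (∀ i, (f i).card = d) ∧ ∃ j : X, ∀ i, j ∈ f i} : ℚ)
        / (((S - 1).choose d : ℚ) ^ NC)
      ≤ ((S : ℚ) - 1) * ((d : ℚ) / ((S : ℚ) - 1)) ^ NC := by
  set c : X → ℕ := fun j => #{A ∈ univ.powersetCard d | j ∈ A}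
  have hcount := card_powersetCard_valued_exists_forall_mem_le (ι := Fin NC) (X := X) d
  rw [Fintype.card_fin] at hcount
  have hmem (j : X) : (c j : ℚ) / (Fintype.card X).choose d = d / Fintype.card X := by
    simpa using card_filter_mem_powersetCard_div_choose (mem_univ j) (by simpa [hX])
  have hSX : (S : ℚ) - 1 = Fintype.card X := by
    rw [hX, Nat.cast_sub (by omega), Nat.cast_one]
  rw [← hX, hSX]
  calc _ ≤ (∑ j, (c j : ℚ) ^ NC) / ((Fintype.card X).choose d : ℚ) ^ NC := by
        gcongr
        exact_mod_cast hcount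
    _ = ∑ j, ((c j : ℚ) / (Fintype.card X).choose d) ^ NC := by
        simp only [sum_div, div_pow]
    _ = _ := by simp only [hmem, sum_const, card_univ, nsmul_eq_mul]

/-- Probability of a privacy breach of a fixed agent under uniformly random independent
neighbor sets: with `|X| = S - 1`, `1 ≤ d ≤ S - 1`, `N_C ≥ 1`, the number of functions
`f : Fin N_C → {d-element subsets of X}` such that some `j ∈ X` lies in `f i` for every
`i`, divided by `C(S-1, d)^{N_C}`, is at most `(S-1) * (d/(S-1))^{N_C}` in `ℚ`. -/
theorem breach_probability_le
    (S d NC : ℕ) (X : Type*) [Fintype X] [DecidableEq X]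
    (hX : Fintype.card X = S - 1) (hS : 2 ≤ S) (hd1 : 1 ≤ d) (hd2 : d ≤ S - 1)
    (hNC : 1 ≤ NC) :
    (Nat.card {f : Fin NC → Finset X //
        (∀ i, (f i).card = d) ∧ ∃ j : X, ∀ i, j ∈ f i} : ℚ)
        / (((S - 1).choose d : ℚ) ^ NC)
      ≤ ((S : ℚ) - 1) * ((d : ℚ) / ((S : ℚ) - 1)) ^ NC :=
  breach_probability_le_general S d NC X hX hS hd2
end

section
/- Let S, d, N_L, N_C be natural numbers with 1 ≤ d, 1 ≤ N_L, 1 ≤ N_C, and N_L + d < S. Then, over the real numbers, (1 − ∏_{l=1}^{N_L} (1 − d/(S−l)))^{N_C} ≤ exp(−N_C · (1 − d/(S−N_L))^{N_L}). -/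
/-!
Every factor `1 - d/(S-l)` lies between `q = 1 - d/(S-N_L)` and `1`, so the product `p` satisfies
`q ^ N_L ≤ p ≤ 1`. Then `1 - p ≤ exp (-p)` gives `(1 - p) ^ N_C ≤ exp (-N_C p) ≤ exp (-N_C q ^ N_L)`.
-/

open Finset

lemma Real.one_sub_pow_le_exp_neg_mul {x : ℝ} (hx : x ≤ 1) (n : ℕ) :
    (1 - x) ^ n ≤ Real.exp (-n * x) :=
  calc (1 - x) ^ n ≤ Real.exp (-x) ^ n :=
        pow_le_pow_left₀ (sub_nonneg.2 hx) (Real.one_sub_le_exp_neg x) n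
    _ = Real.exp (-n * x) := by rw [← Real.exp_nat_mul]; ring_nf

lemma Real.one_sub_pow_le_exp_neg_mul_of_le {x y : ℝ} (hxy : x ≤ y) (hy : y ≤ 1) (n : ℕ) :
    (1 - y) ^ n ≤ Real.exp (-n * x) :=
  (Real.one_sub_pow_le_exp_neg_mul hy n).trans <|
    Real.exp_le_exp.2 <| by nlinarith [(n.cast_nonneg : (0 : ℝ) ≤ n)]

section OneSubDivSub

variable {S d a b : ℝ}

lemma one_sub_div_sub_nonneg (hd : 0 ≤ d) (h : b + d ≤ S) : 0 ≤ 1 - d / (S - b) :=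
  sub_nonneg.2 <| div_le_one_of_le₀ (by linarith) (by linarith)

lemma one_sub_div_sub_le_one (hd : 0 ≤ d) (h : b + d ≤ S) : 1 - d / (S - b) ≤ 1 :=
  sub_le_self _ <| div_nonneg hd (by linarith)

lemma one_sub_div_sub_le_of_le (hd : 0 ≤ d) (hab : a ≤ b) (hb : b < S) :
    1 - d / (S - b) ≤ 1 - d / (S - a) := by
  have : 0 < S - b := sub_pos.2 hb
  gcongr

end OneSubDivSub

lemma pow_le_prod_one_sub_div_sub {S d n : ℕ} (h : n + d < S) :
    (1 - (d : ℝ) / (S - n)) ^ n ≤ ∏ l ∈ Icc 1 n, (1 - (d : ℝ) / (S - l)) := by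
  have hS : (n : ℝ) + d < S := by exact_mod_cast h
  simpa using prod_le_prod (s := Icc 1 n) (fun _ _ => one_sub_div_sub_nonneg d.cast_nonneg hS.le)
    fun l hl => one_sub_div_sub_le_of_le d.cast_nonneg (Nat.cast_le.2 (mem_Icc.1 hl).2) (by linarith)

lemma prod_one_sub_div_sub_le_one {S d n : ℕ} (h : n + d ≤ S) :
    ∏ l ∈ Icc 1 n, (1 - (d : ℝ) / (S - l)) ≤ 1 := by
  have hS (l : ℕ) (hl : l ∈ Icc 1 n) : (l : ℝ) + d ≤ S := by
    exact_mod_cast (Nat.add_le_add_right (mem_Icc.1 hl).2 d).trans h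
  exact prod_le_one (fun l hl => one_sub_div_sub_nonneg d.cast_nonneg (hS l hl))
    fun l hl => one_sub_div_sub_le_one d.cast_nonneg (hS l hl)

theorem collusion_breach_upper_bound_general
    (S d NL NC : ℕ) (hS : NL + d < S) :
    (1 - ∏ l ∈ Finset.Icc 1 NL, (1 - (d : ℝ) / ((S : ℝ) - (l : ℝ)))) ^ NC
      ≤ Real.exp (-(NC : ℝ) * (1 - (d : ℝ) / ((S : ℝ) - (NL : ℝ))) ^ NL) :=
  Real.one_sub_pow_le_exp_neg_mul_of_le (pow_le_prod_one_sub_div_sub hS)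
    (prod_one_sub_div_sub_le_one hS.le) NC

/-- Upper bound of Theorem 2 of the paper: for `1 ≤ d`, `1 ≤ N_L`, `1 ≤ N_C`,
`N_L + d < S`, the collusion breach probability satisfies
`(1 - ∏_{l=1}^{N_L} (1 - d/(S-l)))^{N_C} ≤ exp(-N_C (1 - d/(S-N_L))^{N_L})`. -/
theorem collusion_breach_upper_bound
    (S d NL NC : ℕ) (hd : 1 ≤ d) (hNL : 1 ≤ NL) (hNC : 1 ≤ NC) (hS : NL + d < S) :
    (1 - ∏ l ∈ Finset.Icc 1 NL, (1 - (d : ℝ) / ((S : ℝ) - (l : ℝ)))) ^ NC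
      ≤ Real.exp (-(NC : ℝ) * (1 - (d : ℝ) / ((S : ℝ) - (NL : ℝ))) ^ NL) :=
  collusion_breach_upper_bound_general S d NL NC hS
end

section
/- Let E, d, N_E be natural numbers with 1 ≤ d and N_E < E − d + 1, let η be a real number with 0 < η < 1, and let N_C be a natural number with N_C ≥ |ln η| · (1 − N_E/(E−d+1))^{−d}. Then (1 − ∏_{l=0}^{d−1} (1 − N_E/(E−l)))^{N_C} ≤ η. -/
/-! Every factor `1 - N_E/(E-l)` with `l < d` is at least `q = 1 - N_E/(E-d+1)`, so the product
is at least `q^d`. Since `1 - p ≤ exp (-p)`, the breach probability is at most `exp (-N_C q^d)`,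
and the rule for `N_C` makes this at most `exp (log η) = η`. -/

open Finset Real

theorem one_sub_pow_le_of_neg_log_le_mul {p η : ℝ} {n : ℕ} (hp : p ≤ 1) (hη : 0 < η)
    (h : -log η ≤ n * p) : (1 - p) ^ n ≤ η :=
  calc (1 - p) ^ n ≤ exp (-p) ^ n := pow_le_pow_left₀ (by linarith) (one_sub_le_exp_neg p) n
    _ = exp (n * -p) := (exp_nat_mul _ _).symm
    _ ≤ exp (log η) := exp_le_exp.mpr (by linarith)
    _ = η := exp_log hη

theorem one_sub_div_sub_mem_Icc {E a : ℝ} {d l : ℕ} (hl : l < d) (ha : 0 ≤ a)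
    (hE : 0 < E - d + 1) :
    1 - a / (E - d + 1) ≤ 1 - a / (E - l) ∧ 1 - a / (E - l) ≤ 1 := by
  have hld : (l : ℝ) + 1 ≤ d := by exact_mod_cast hl
  have hEl : E - d + 1 ≤ E - l := by linarith
  constructor
  · gcongr
  · linarith [div_nonneg ha (hE.trans_le hEl).le]

theorem pow_le_prod_one_sub_div_le_one {E a : ℝ} {d : ℕ} (ha : 0 ≤ a) (haE : a < E - d + 1) :
    (1 - a / (E - d + 1)) ^ d ≤ ∏ l ∈ range d, (1 - a / (E - l)) ∧
      ∏ l ∈ range d, (1 - a / (E - l)) ≤ 1 := by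
  have hE : 0 < E - d + 1 := ha.trans_lt haE
  have hq : 0 ≤ 1 - a / (E - d + 1) := (sub_pos.mpr ((div_lt_one hE).mpr haE)).le
  have hfac (l) (hl : l ∈ range d) := one_sub_div_sub_mem_Icc (mem_range.mp hl) ha hE
  constructor
  · simpa using prod_le_prod (fun _ _ ↦ hq) (fun l hl ↦ (hfac l hl).1)
  · exact prod_le_one (fun l hl ↦ hq.trans (hfac l hl).1) (fun l hl ↦ (hfac l hl).2)

theorem eavesdrop_NC_rule_general
    (E d NE NC : ℕ)
    (hNE : (NE : ℝ) < (E : ℝ) - (d : ℝ) + 1)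
    (η : ℝ) (hη0 : 0 < η) (hη1 : η < 1)
    (hNC : (NC : ℝ) ≥ |Real.log η| * (1 - (NE : ℝ) / ((E : ℝ) - (d : ℝ) + 1)) ^ (-(d : ℤ))) :
    (1 - ∏ l ∈ Finset.range d, (1 - (NE : ℝ) / ((E : ℝ) - (l : ℝ)))) ^ NC ≤ η := by
  obtain ⟨hlower, hupper⟩ := pow_le_prod_one_sub_div_le_one (Nat.cast_nonneg NE) hNE
  set q := 1 - (NE : ℝ) / ((E : ℝ) - (d : ℝ) + 1)
  have hqd : 0 < q ^ d :=
    pow_pos (sub_pos.mpr ((div_lt_one ((Nat.cast_nonneg NE).trans_lt hNE)).mpr hNE)) d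
  rw [abs_of_neg (log_neg hη0 hη1), zpow_neg, zpow_natCast, ge_iff_le,
    ← div_eq_mul_inv, div_le_iff₀ hqd] at hNC
  refine one_sub_pow_le_of_neg_log_le_mul hupper hη0 (hNC.trans ?_)
  gcongr

/-- The paper's rule for choosing `N_C` under eavesdropping: for `1 ≤ d`,
`N_E < E - d + 1`, `0 < η < 1`, and `N_C ≥ |ln η| (1 - N_E/(E-d+1))^{-d}`, the
eavesdropping breach probability `(1 - ∏_{l=0}^{d-1}(1 - N_E/(E-l)))^{N_C}` is at
most `η`. -/
theorem eavesdrop_NC_rule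
    (E d NE NC : ℕ) (hd : 1 ≤ d)
    (hNE : (NE : ℝ) < (E : ℝ) - (d : ℝ) + 1)
    (η : ℝ) (hη0 : 0 < η) (hη1 : η < 1)
    (hNC : (NC : ℝ) ≥ |Real.log η| * (1 - (NE : ℝ) / ((E : ℝ) - (d : ℝ) + 1)) ^ (-(d : ℤ))) :
    (1 - ∏ l ∈ Finset.range d, (1 - (NE : ℝ) / ((E : ℝ) - (l : ℝ)))) ^ NC ≤ η :=
  eavesdrop_NC_rule_general E d NE NC hNE η hη0 hη1 hNC
end
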